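/- With φ the Fox function, for every even l and every k with 2k ≥ l, φ(l,2k) = φ(l,2k+1). -/
import Mathlib

theorem key_phi (φ : ℕ → ℕ → ℤ)
    (h0 : ∀ k : ℕ, φ 0 k = 1)
    (hdiag : ∀ k : ℕ, φ k k = (-1 : ℤ) ^ k)
    (hrec : ∀ l k : ℕ, 0 < l → l < k →
      φ l k = (-1 : ℤ) ^ (k - l + 1) * φ (l - 1) (k - 1) + φ l (k - 1)) :
    ∀ n l : ℕ, l ≤ n → φ l n =
      if Even l then ((n / 2).choose (l / 2) : ℤ)
      else if Even n then 0 else -((n / 2).choose (l / 2) : ℤ) := by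
  intro n
  induction n with
  | zero =>
    intro l hl
    interval_cases l
    simp [h0]
  | succ n ih =>
    intro l hl
    rcases Nat.eq_zero_or_pos l with rfl | hlpos
    · simp [h0]
    rcases eq_or_lt_of_le hl with rfl | hlt
    · rw [hdiag]
      rcases Nat.even_or_odd (n+1) with he | ho
      · simp [he, he.neg_one_pow, Nat.choose_self]
      · simp [Nat.not_even_iff_odd.mpr ho, ho.neg_one_pow, Nat.choose_self]
    · have hln : l ≤ n := Nat.lt_succ_iff.mp hlt
      rw [hrec l (n+1) hlpos hlt]
      simp only [Nat.add_sub_cancel]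
      rw [ih (l-1) (le_trans (Nat.sub_le _ _) hln), ih l hln]
      rcases Nat.even_or_odd l with ⟨a, ha⟩ | ⟨a, ha⟩ <;>
        rcases Nat.even_or_odd n with ⟨b, hb⟩ | ⟨b, hb⟩
      · -- l even, n even
        have hsgn : Even (n + 1 - l + 1) := ⟨b - a + 1, by omega⟩
        have h1 : ¬ Even (l - 1) := by
          rw [Nat.not_even_iff_odd]; exact ⟨a - 1, by omega⟩
        have h2 : Even n := ⟨b, hb⟩
        have h3 : Even l := ⟨a, ha⟩
        have h4 : ¬ Even (n + 1) := by
          rw [Nat.not_even_iff_odd]; exact ⟨b, by omega⟩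
        simp only [if_pos h2, if_pos h3, if_neg h1, hsgn.neg_one_pow]
        have e1 : (n + 1) / 2 = n / 2 := by omega
        rw [e1]; ring
      · -- l even, n odd
        have hsgn : ¬ Even (n + 1 - l + 1) := by
          rw [Nat.not_even_iff_odd]; exact ⟨b - a + 1, by omega⟩
        have h1 : ¬ Even (l - 1) := by
          rw [Nat.not_even_iff_odd]; exact ⟨a - 1, by omega⟩
        have h2 : ¬ Even n := by
          rw [Nat.not_even_iff_odd]; exact ⟨b, hb⟩
        have h3 : Even l := ⟨a, ha⟩
        simp only [if_pos h3, if_neg h1, if_neg h2, (Nat.not_even_iff_odd.mp hsgn).neg_one_pow]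
        have ea : l / 2 = a := by omega
        have ea1 : (l - 1) / 2 = a - 1 := by omega
        have eb : n / 2 = b := by omega
        have eb1 : (n + 1) / 2 = b + 1 := by omega
        rw [ea, ea1, eb, eb1]
        obtain ⟨c, rfl⟩ : ∃ c, a = c + 1 := ⟨a - 1, by omega⟩
        rw [Nat.choose_succ_succ b c]
        push_cast
        ring_nf
        simp [Nat.add_comm]
      · -- l odd, n even
        have hsgn : ¬ Even (n + 1 - l + 1) := by
          rw [Nat.not_even_iff_odd]; exact ⟨b - a, by omega⟩
        have h1 : Even (l - 1) := ⟨a, by omega⟩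
        have h2 : Even n := ⟨b, hb⟩
        have h3 : ¬ Even l := by
          rw [Nat.not_even_iff_odd]; exact ⟨a, by omega⟩
        have h4 : ¬ Even (n + 1) := by
          rw [Nat.not_even_iff_odd]; exact ⟨b, by omega⟩
        simp only [if_pos h1, if_pos h2, if_neg h3, if_neg h4,
          (Nat.not_even_iff_odd.mp hsgn).neg_one_pow]
        have ea : l / 2 = a := by omega
        have ea1 : (l - 1) / 2 = a := by omega
        have e1 : (n + 1) / 2 = n / 2 := by omega
        rw [ea, ea1, e1]; ring
      · -- l odd, n odd
        have hsgn : Even (n + 1 - l + 1) := ⟨b - a + 1, by omega⟩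
        have h1 : Even (l - 1) := ⟨a, by omega⟩
        have h2 : ¬ Even n := by
          rw [Nat.not_even_iff_odd]; exact ⟨b, hb⟩
        have h3 : ¬ Even l := by
          rw [Nat.not_even_iff_odd]; exact ⟨a, by omega⟩
        have h4 : Even (n + 1) := ⟨b + 1, by omega⟩
        simp only [if_pos h1, if_pos h4, if_neg h3, if_neg h2, hsgn.neg_one_pow]
        have ea : l / 2 = a := by omega
        have ea1 : (l - 1) / 2 = a := by omega
        rw [ea, ea1]; ring

theorem stmt (φ : ℕ → ℕ → ℤ)
    (h0 : ∀ k : ℕ, φ 0 k = 1)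
    (hdiag : ∀ k : ℕ, φ k k = (-1 : ℤ) ^ k)
    (hrec : ∀ l k : ℕ, 0 < l → l < k →
      φ l k = (-1 : ℤ) ^ (k - l + 1) * φ (l - 1) (k - 1) + φ l (k - 1)) :
    ∀ l k : ℕ, Even l → l ≤ 2 * k → φ l (2 * k) = φ l (2 * k + 1) := by
  intro l k hle hlk
  rw [key_phi φ h0 hdiag hrec (2 * k) l hlk,
      key_phi φ h0 hdiag hrec (2 * k + 1) l (by omega)]
  have e : (2 * k + 1) / 2 = (2 * k) / 2 := by omega
  simp [hle, e]
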